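/- arXiv:2004.05309 — 6 statements merged into one kernel-verified Lean document; each statement's English description precedes it below -/
import Mathlib

section
/- For every Lyndon word w of length at least 2, there exist strings u and v with w = uv such that v is the longest proper suffix of w that is a Lyndon word, and both u and v are Lyndon words. -/
open List

variable {α : Type*} [LinearOrder α]

/-- A nonempty string is a Lyndon word if it is lexicographically strictly
smaller than every nonempty proper suffix. -/
def IsLyndon (w : List α) : Prop :=
  w ≠ [] ∧ ∀ u v : List α, w = u ++ v → u ≠ [] → v ≠ [] → w < v

/-!
Take for `v` the lexicographically least nonempty proper suffix of `w = u ++ v`. Every proper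
suffix of `v` is a proper suffix of `w`, hence `v` is Lyndon; a longer Lyndon proper suffix of `w`
would have `v` as a proper suffix and so be smaller than `v`. For `u = a ++ s`, assume `s ≤ u`.
If `s` is a prefix of `u = s ++ t`, the Lyndon property `s ++ t ++ v = w < s ++ v` gives
`t ++ v < v`, against the choice of `v`; otherwise `s < u` is decided at a position inside `u`,
so `s ++ v < u ++ v = w`, against `w < s ++ v`.
-/

namespace List

theorem lt_of_append_lt_append_left {a b c : List α} (h : a ++ b < a ++ c) : b < c := by
  by_contra hbc
  exact append_left_le (l₁ := a) (List.not_lt.1 hbc) h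

theorem append_lt_append_of_lt_of_not_prefix {β : Type*} [LT β] {l₁ l₂ : List β}
    (h : l₁ < l₂) (hp : ¬ l₁ <+: l₂) (a b : List β) : l₁ ++ a < l₂ ++ b := by
  induction l₁ generalizing l₂ with
  | nil => exact absurd nil_prefix hp
  | cons x l₁ ih =>
    cases l₂ with
    | nil => exact absurd h (not_lt_nil _)
    | cons y l₂ =>
      cases h with
      | rel hxy => exact Lex.rel hxy
      | cons h => exact Lex.cons (ih h fun hpre => hp (cons_prefix_cons.2 ⟨rfl, hpre⟩))

end List

theorem exists_append_forall_le_proper_suffix (w : List α) (h2 : 2 ≤ w.length) :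
    ∃ u v, w = u ++ v ∧ u ≠ [] ∧ v ≠ [] ∧
      ∀ u' v', w = u' ++ v' → u' ≠ [] → v' ≠ [] → v ≤ v' := by
  set S : Set (List α) := {v | ∃ u, w = u ++ v ∧ u ≠ [] ∧ v ≠ []}
  have hfin : S.Finite :=
    w.tails.finite_toSet.subset fun v ⟨u, huv, _⟩ => (mem_tails _ _).2 ⟨u, huv.symm⟩
  have hne : S.Nonempty := by
    obtain ⟨x, y, t, rfl⟩ : ∃ x y t, w = x :: y :: t := by
      match w, h2 with
      | x :: y :: t, _ => exact ⟨x, y, t, rfl⟩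
    exact ⟨y :: t, [x], rfl, cons_ne_nil _ _, cons_ne_nil _ _⟩
  obtain ⟨v, ⟨u, huv, hu, hv⟩, hmin⟩ := Set.exists_min_image S id hfin hne
  exact ⟨u, v, huv, hu, hv, fun u' v' h hu' hv' => hmin v' ⟨u', h, hu', hv'⟩⟩

theorem isLyndon_of_forall_le_proper_suffix {w u v : List α} (huv : w = u ++ v) (hv : v ≠ [])
    (hmin : ∀ u' v', w = u' ++ v' → u' ≠ [] → v' ≠ [] → v ≤ v') : IsLyndon v := by
  refine ⟨hv, fun a b hab ha hb => lt_of_le_of_ne ?_ ?_⟩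
  · exact hmin (u ++ a) b (by rw [huv, hab, append_assoc]) (by simp [ha]) hb
  · rintro rfl
    have := congrArg length hab
    simp only [length_append] at this
    have := length_pos_iff.2 ha
    omega

theorem length_le_of_forall_le_proper_suffix {w u v : List α} (huv : w = u ++ v) (hv : v ≠ [])
    (hmin : ∀ u' v', w = u' ++ v' → u' ≠ [] → v' ≠ [] → v ≤ v')
    {s : List α} (hsw : s <:+ w) (hs : s ≠ w) (hlyn : IsLyndon s) : s.length ≤ v.length := by
  by_contra! hlt
  obtain ⟨a, rfl⟩ : v <:+ s :=
    (suffix_or_suffix_of_suffix ⟨u, huv.symm⟩ hsw).resolve_right fun h => by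
      have := h.length_le; omega
  have ha : a ≠ [] := by rintro rfl; simp at hlt
  obtain ⟨b, rfl⟩ := hsw
  have hb : b ≠ [] := by rintro rfl; exact hs rfl
  exact not_lt_of_ge (hmin b (a ++ v) rfl hb hlyn.1) (hlyn.2 a v rfl ha hv)

theorem isLyndon_left_of_forall_le_proper_suffix {w u v : List α} (hw : IsLyndon w)
    (huv : w = u ++ v) (hu : u ≠ [])
    (hmin : ∀ u' v', w = u' ++ v' → u' ≠ [] → v' ≠ [] → v ≤ v') : IsLyndon u := by
  refine ⟨hu, fun a s has ha hs => lt_of_not_ge fun hsu => ?_⟩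
  have hw_lt : w < s ++ v := hw.2 a (s ++ v) (by rw [huv, has, append_assoc]) ha (by simp [hs])
  by_cases hpre : s <+: u
  · obtain ⟨t, rfl⟩ := hpre
    have ht : t ≠ [] := by
      rintro rfl
      have := congrArg length has
      simp only [append_nil, length_append] at this
      have := length_pos_iff.2 ha
      omega
    have htv : t ++ v < v := by
      rw [huv, append_assoc] at hw_lt
      exact lt_of_append_lt_append_left hw_lt
    exact not_lt_of_ge (hmin s (t ++ v) (by rw [huv, append_assoc]) hs (by simp [ht])) htv
  · have hsv : s ++ v < w := huv ▸
      append_lt_append_of_lt_of_not_prefix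
        (lt_of_le_of_ne hsu fun h => hpre (h ▸ prefix_refl s)) hpre v v
    exact lt_asymm hw_lt hsv

theorem stmt2 (w : List α) (hw : IsLyndon w) (h2 : 2 ≤ w.length) :
    ∃ u v : List α, w = u ++ v ∧ u ≠ [] ∧ v ≠ [] ∧ IsLyndon u ∧ IsLyndon v ∧
      ∀ s : List α, s <:+ w → s ≠ w → IsLyndon s → s.length ≤ v.length := by
  obtain ⟨u, v, huv, hu, hv, hmin⟩ := exists_append_forall_le_proper_suffix w h2
  exact ⟨u, v, huv, hu, hv, isLyndon_left_of_forall_le_proper_suffix hw huv hu hmin,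
    isLyndon_of_forall_le_proper_suffix huv hv hmin,
    fun _ hsw hs hlyn => length_le_of_forall_le_proper_suffix huv hv hmin hsw hs hlyn⟩
end

section
/- If (u, v) is the standard factorization of a Lyndon word w of length at least 2, then u is lexicographically strictly smaller than v. -/
open List

variable {α : Type*} [LinearOrder α]

/-- `(u, v)` is the standard factorization of the Lyndon word `u ++ v`:
`v` is the longest proper suffix of `u ++ v` that is a Lyndon word. -/
def IsStdFact (u v : List α) : Prop :=
  IsLyndon (u ++ v) ∧ u ≠ [] ∧ v ≠ [] ∧ IsLyndon v ∧
    ∀ s : List α, s <:+ u ++ v → s ≠ u ++ v → IsLyndon s → s.length ≤ v.length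

/-- Core's `List.le_append_left` is stated for `List.instLE`; Mathlib's `≤` on lists is
definitionally its negated `<`, hence the detour through `le_of_not_gt`. -/
theorem List.le_append_right_self (u v : List α) : u ≤ u ++ v :=
  le_of_not_gt List.le_append_left

theorem IsLyndon.lt_of_append {u v : List α} (h : IsLyndon (u ++ v)) (hu : u ≠ []) (hv : v ≠ []) :
    u < v :=
  (u.le_append_right_self v).trans_lt (h.2 u v rfl hu hv)

theorem stmt3 (u v : List α) (h : IsStdFact u v) : u < v :=
  h.1.lt_of_append h.2.1 h.2.2.1
end

section
/- A Lyndon word w is strictly smaller than every rotation of w other than w itself. -/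
open List

variable {α : Type*} [LinearOrder α]

lemma le_append_self (l s : List α) : l ≤ l ++ s := by
  induction l with
  | nil => cases s with
    | nil => exact le_refl _
    | cons b t => exact le_of_lt List.Lex.nil
  | cons a t ih => exact List.cons_le_cons a ih

theorem stmt4 (w : List α) (hw : IsLyndon w) :
    ∀ x y : List α, w = x ++ y → y ++ x ≠ w → w < y ++ x := by
  intro x y hxy hne
  rcases eq_or_ne x [] with rfl | hx
  · simp at hxy; simp [← hxy] at hne
  rcases eq_or_ne y [] with rfl | hy
  · simp at hxy; simp [← hxy] at hne
  have h1 : w < y := hw.2 x y hxy hx hy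
  exact lt_of_lt_of_le h1 (le_append_self y x)
end

section
/- The longest prefix of a nonempty string P that is a Lyndon word equals the first factor of the Lyndon factorization of P. -/
/-!
If a Lyndon prefix `q` of `P = P₁ P₂ ⋯ P_k` were longer than `P₁`, the part `u` of `q` lying in
the last factor `P_i` it meets would be a nonempty prefix of `P_i` with `i ≥ 2`, so
`u ≤ P_i ≤ P₁ < q`; but `u` is a proper suffix of the Lyndon word `q`, so `q < u`.
-/

open List

variable {α : Type*} [LinearOrder α]

namespace List

theorem lt_append_of_ne_nil (u : List α) {t : List α} (ht : t ≠ []) : u < u ++ t := by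
  obtain ⟨a, t, rfl⟩ := exists_cons_of_ne_nil ht
  simpa using append_left_lt (l₁ := u) (nil_lt_cons a t)

theorem exists_eq_append_isPrefix_of_isPrefix_flatten {β : Type*} {q : List β} {G : List (List β)}
    (hq : q ≠ []) (h : q <+: G.flatten) :
    ∃ s u, q = s ++ u ∧ u ≠ [] ∧ ∃ g ∈ G, u <+: g := by
  induction G generalizing q with
  | nil => exact absurd (eq_nil_of_prefix_nil h) hq
  | cons g G ih =>
    rw [flatten_cons] at h
    rcases prefix_or_prefix_of_prefix h (prefix_append g G.flatten) with hqg | ⟨q', rfl⟩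
    · exact ⟨[], q, rfl, hq, g, mem_cons_self, hqg⟩
    rcases eq_or_ne q' [] with rfl | hq'
    · exact ⟨[], g, by simp, by simpa using hq, g, mem_cons_self, prefix_refl g⟩
    obtain ⟨s, u, rfl, hu, g', hg', hug'⟩ := ih hq' ((prefix_append_right_inj g).mp h)
    exact ⟨g ++ s, u, (append_assoc ..).symm, hu, g', mem_cons_of_mem g hg', hug'⟩

end List

theorem IsLyndon.length_le_of_isPrefix_append_flatten {q b : List α} {G : List (List α)}
    (hq : IsLyndon q) (hb : b ≠ []) (hG : ∀ g ∈ G, g ≤ b) (hpre : q <+: b ++ G.flatten) :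
    q.length ≤ b.length := by
  by_contra! hlen
  obtain ⟨r, rfl⟩ := prefix_of_prefix_length_le (prefix_append b G.flatten) hpre hlen.le
  have hr : r ≠ [] := by rintro rfl; simp at hlen
  obtain ⟨s, u, rfl, hu, g, hg, hug⟩ := exists_eq_append_isPrefix_of_isPrefix_flatten hr
    ((prefix_append_right_inj b).mp hpre)
  have hlt_u : b ++ (s ++ u) < u := hq.2 (b ++ s) u (append_assoc ..).symm (by simp [hb]) hu
  have hu_lt : u < b ++ (s ++ u) :=
    -- core's `IsPrefix.le` is stated for core's `≤` on lists, which unfolds to `¬ g < u`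
    calc u ≤ g := not_lt.mp hug.le
      _ ≤ b := hG g hg
      _ < b ++ (s ++ u) := lt_append_of_ne_nil b hr
  exact lt_asymm hlt_u hu_lt

theorem stmt5 (P : List α) (F : List (List α)) (hne : F ≠ [])
    (hP : P = F.flatten) (hLyn : ∀ f ∈ F, IsLyndon f)
    (hdec : F.Chain' (· ≥ ·)) :
    F.head hne <+: P ∧ IsLyndon (F.head hne) ∧
      ∀ q : List α, q <+: P → IsLyndon q → q.length ≤ (F.head hne).length := by
  obtain ⟨P₁, T, rfl⟩ := exists_cons_of_ne_nil hne
  subst hP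
  have hP₁ : IsLyndon P₁ := hLyn P₁ mem_cons_self
  have hT : ∀ f ∈ T, f ≤ P₁ := (pairwise_cons.mp (isChain_iff_pairwise.mp hdec)).1
  exact ⟨prefix_append P₁ T.flatten, hP₁,
    fun q hq hqL => hqL.length_le_of_isPrefix_append_flatten hP₁.1 hT hq⟩
end

section
/- Every nonempty string P admits a unique factorization P = P_1 P_2 ... P_k into Lyndon words with P_1 >= P_2 >= ... >= P_k in lexicographic order. -/
/-!
Existence: prepend the letters of the word one at a time, each as a one-letter Lyndon word, and
restore monotonicity by merging, since the concatenation `u ++ v` of Lyndon words with `u < v`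
is again Lyndon. Uniqueness: in a factorization `f₁ ≥ f₂ ≥ ⋯`, no Lyndon prefix `g` is longer
than `f₁`, for it would end inside some factor `b` with a nonempty prefix `t` of `b`, and then
`g < t ≤ b ≤ f₁ < g`. Hence both factorizations start with the longest Lyndon prefix.
-/

open List

variable {α : Type*} [LinearOrder α]

namespace List

section Lex

variable {β : Type*} [LT β]

theorem lt_append_of_ne_nil_s6 (u : List β) {w : List β} (hw : w ≠ []) : u < u ++ w := by
  obtain ⟨a, w, rfl⟩ := exists_cons_of_ne_nil hw
  simpa using append_left_lt (l₁ := u) (nil_lt_cons a w)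

theorem append_lt_append_of_lt_of_not_prefix_s6 {u v : List β} (h : u < v) (hnp : ¬u <+: v)
    (a b : List β) : u ++ a < v ++ b := by
  change Lex (· < ·) u v at h
  induction h with
  | nil => exact absurd nil_prefix hnp
  | cons _ ih => exact Lex.cons (ih fun hp => hnp (cons_prefix_cons.2 ⟨rfl, hp⟩))
  | rel hxy => exact Lex.rel hxy

end Lex

theorem exists_eq_append_prefix_of_prefix_flatten {β : Type*} {r : List β} {F : List (List β)}
    (hr : r ≠ []) (h : r <+: F.flatten) : ∃ s t, r = s ++ t ∧ t ≠ [] ∧ ∃ b ∈ F, t <+: b := by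
  induction F generalizing r with
  | nil => exact absurd (prefix_nil.1 h) hr
  | cons f F ih =>
    rcases prefix_or_prefix_of_prefix h (prefix_append f F.flatten) with hrf | ⟨r', rfl⟩
    · exact ⟨[], r, rfl, hr, f, mem_cons_self, hrf⟩
    · rcases eq_or_ne r' [] with rfl | hr'
      · exact ⟨[], f, by simp, by simpa using hr, f, mem_cons_self, prefix_refl f⟩
      · obtain ⟨s, t, rfl, ht, b, hb, htb⟩ := ih hr' ((prefix_append_right_inj f).1 h)
        exact ⟨f ++ s, t, (append_assoc f s t).symm, ht, b, mem_cons_of_mem f hb, htb⟩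

end List

theorem isLyndon_singleton (a : α) : IsLyndon [a] := by
  refine ⟨cons_ne_nil a [], fun u v huv hu hv => ?_⟩
  obtain ⟨x, u, rfl⟩ := exists_cons_of_ne_nil hu
  simp only [cons_append, cons.injEq, nil_eq, append_eq_nil_iff] at huv
  exact absurd huv.2.2 hv

theorem IsLyndon.append_lt_right {u v : List α} (hu : IsLyndon u) (hv : IsLyndon v)
    (huv : u < v) : u ++ v < v := by
  by_cases hp : u <+: v
  · obtain ⟨w, rfl⟩ := hp
    have hw : w ≠ [] := by rintro rfl; simp at huv
    exact append_left_lt (hv.2 u w rfl hu.1 hw)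
  · simpa using append_lt_append_of_lt_of_not_prefix_s6 huv hp v []

theorem IsLyndon.append {u v : List α} (hu : IsLyndon u) (hv : IsLyndon v) (huv : u < v) :
    IsLyndon (u ++ v) := by
  have hlt : u ++ v < v := hu.append_lt_right hv huv
  refine ⟨by simp [hu.1], fun x y hxy hx hy => ?_⟩
  rcases append_eq_append_iff.1 hxy with ⟨a, rfl, rfl⟩ | ⟨c, rfl, rfl⟩
  · rcases eq_or_ne a [] with rfl | ha
    · simpa using hlt
    · exact hlt.trans (hv.2 a y rfl ha hy)
  · rcases eq_or_ne c [] with rfl | hc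
    · simpa using hlt
    · have hnp : ¬(x ++ c) <+: c := fun hp => hx (by simpa using hp.length_le)
      exact append_lt_append_of_lt_of_not_prefix_s6 (hu.2 x c rfl hx hc) hnp v v

def IsLyndonFactorization (F : List (List α)) : Prop :=
  (∀ f ∈ F, IsLyndon f) ∧ F.IsChain (· ≥ ·)

namespace IsLyndonFactorization

theorem tail {f : List α} {F : List (List α)} (hF : IsLyndonFactorization (f :: F)) :
    IsLyndonFactorization F :=
  ⟨fun g hg => hF.1 g (mem_cons_of_mem f hg), hF.2.tail⟩

theorem exists_flatten_eq_append {w : List α} (hw : IsLyndon w) {G : List (List α)}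
    (hG : IsLyndonFactorization G) :
    ∃ H, IsLyndonFactorization H ∧ H.flatten = w ++ G.flatten := by
  induction G generalizing w with
  | nil => exact ⟨[w], ⟨by simpa using hw, isChain_singleton w⟩, by simp⟩
  | cons g G ih =>
    rcases le_or_gt g w with hgw | hwg
    · exact ⟨w :: g :: G, ⟨forall_mem_cons.2 ⟨hw, hG.1⟩, isChain_cons_cons.2 ⟨hgw, hG.2⟩⟩, rfl⟩
    · obtain ⟨H, hH, hflat⟩ := ih (hw.append (hG.1 g mem_cons_self) hwg) hG.tail
      exact ⟨H, hH, by simp [hflat]⟩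

theorem length_le_length_head {f : List α} {F : List (List α)}
    (hF : IsLyndonFactorization (f :: F)) {g : List α} (hg : IsLyndon g)
    (hgp : g <+: (f :: F).flatten) : g.length ≤ f.length := by
  by_contra! hlt
  have hf : f ≠ [] := (hF.1 f mem_cons_self).1
  have hle : ∀ b ∈ F, b ≤ f := (pairwise_cons.1 (isChain_iff_pairwise.1 hF.2)).1
  obtain ⟨r, rfl⟩ : f <+: g := prefix_of_prefix_length_le (prefix_append f _) hgp hlt.le
  have hr : r ≠ [] := by rintro rfl; simp at hlt
  obtain ⟨s, t, rfl, ht, b, hb, htb⟩ :=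
    exists_eq_append_prefix_of_prefix_flatten hr ((prefix_append_right_inj f).1 hgp)
  have : f ++ (s ++ t) < f :=
    calc f ++ (s ++ t) < t := hg.2 (f ++ s) t (append_assoc f s t).symm (by simp [hf]) ht
      _ ≤ b := le_of_not_gt htb.le -- core's `≤` on lists is not Mathlib's instance
      _ ≤ f := hle b hb
  exact (lt_append_of_ne_nil_s6 f hr).not_gt this

theorem eq_nil_of_flatten_eq_nil {F : List (List α)} (hF : IsLyndonFactorization F)
    (h : F.flatten = []) : F = [] :=
  eq_nil_iff_forall_not_mem.2 fun f hf => (hF.1 f hf).1 (flatten_eq_nil_iff.1 h f hf)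

theorem eq_of_flatten_eq {F G : List (List α)} (hF : IsLyndonFactorization F)
    (hG : IsLyndonFactorization G) (h : F.flatten = G.flatten) : F = G := by
  induction F generalizing G with
  | nil => exact (hG.eq_nil_of_flatten_eq_nil h.symm).symm
  | cons f F ih =>
    cases G with
    | nil => exact hF.eq_nil_of_flatten_eq_nil h
    | cons g G =>
      have hfg : f = g := by
        have hf : f <+: (g :: G).flatten := h ▸ prefix_append f F.flatten
        have hg : g <+: (f :: F).flatten := h.symm ▸ prefix_append g G.flatten
        have hlen : f.length = g.length := le_antisymm
          (hG.length_le_length_head (hF.1 f mem_cons_self) hf)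
          (hF.length_le_length_head (hG.1 g mem_cons_self) hg)
        exact (prefix_of_prefix_length_le hf (prefix_append g G.flatten) hlen.le).eq_of_length hlen
      subst hfg
      rw [ih hF.tail hG.tail (append_cancel_left h)]

end IsLyndonFactorization

theorem exists_isLyndonFactorization (P : List α) :
    ∃ F, IsLyndonFactorization F ∧ F.flatten = P := by
  induction P with
  | nil => exact ⟨[], ⟨by simp, isChain_nil⟩, rfl⟩
  | cons a P ih =>
    obtain ⟨G, hG, rfl⟩ := ih
    exact hG.exists_flatten_eq_append (isLyndon_singleton a)

theorem stmt6_general (P : List α) :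
    ∃! F : List (List α),
      P = F.flatten ∧ (∀ f ∈ F, IsLyndon f) ∧ F.Chain' (· ≥ ·) := by
  obtain ⟨F, hF, rfl⟩ := exists_isLyndonFactorization P
  exact ⟨F, ⟨rfl, hF⟩, fun G ⟨hP, hG⟩ => IsLyndonFactorization.eq_of_flatten_eq hG hF hP.symm⟩

theorem stmt6 (P : List α) (hP : P ≠ []) :
    ∃! F : List (List α),
      P = F.flatten ∧ (∀ f ∈ F, IsLyndon f) ∧ F.Chain' (· ≥ ·) :=
  stmt6_general P
end

section
/- In the Lyndon factorization P = P_1 P_2 ... P_k of a nonempty string P, the last factor P_k is the lexicographically smallest nonempty suffix of P. -/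
/-!
Let `F = [P₁, …, Pₖ]`. A nonempty suffix `v` of `P₁ ⋯ Pₖ` either is a suffix of `P₂ ⋯ Pₖ`,
handled by induction, or has the form `s ++ P₂ ⋯ Pₖ` with `s` a nonempty suffix of `P₁`.
In the second case `Pₖ ≤ P₁ ≤ s ≤ v`: the factors are non-increasing, a Lyndon word is
minimal among its nonempty suffixes, and a string is at most any of its extensions.
-/

open List

variable {α : Type*} [LinearOrder α]

theorem IsLyndon.le_of_isSuffix {w v : List α} (hw : IsLyndon w) (hv : v <:+ w)
    (hv₀ : v ≠ []) : w ≤ v := by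
  obtain ⟨u, rfl⟩ := hv
  rcases eq_or_ne u [] with rfl | hu
  · exact le_rfl
  · exact (hw.2 u v rfl hu hv₀).le

theorem suffix_append_cases {β : Type*} {v a b : List β} (h : v <:+ a ++ b) :
    v <:+ b ∨ ∃ s, s <:+ a ∧ s ≠ [] ∧ v = s ++ b := by
  obtain ⟨t, ht⟩ := h
  rcases append_eq_append_iff.mp ht with ⟨s, rfl, rfl⟩ | ⟨c, -, rfl⟩
  · rcases eq_or_ne s [] with rfl | hs
    · simp
    · exact .inr ⟨s, suffix_append t s, hs, rfl⟩
  · exact .inl (suffix_append c v)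

theorem getLast_le_head_of_isChain_ge {β : Type*} [Preorder β] {w : β} {F : List β}
    (hdec : (w :: F).IsChain (· ≥ ·)) : (w :: F).getLast (cons_ne_nil w F) ≤ w := by
  have hsorted := (pairwise_cons.mp (isChain_iff_pairwise.mp hdec)).1
  rcases mem_cons.mp (getLast_mem (cons_ne_nil w F)) with h | h
  · exact h.le
  · exact hsorted _ h

theorem getLast_le_of_isSuffix_flatten {F : List (List α)} (hne : F ≠ [])
    (hLyn : ∀ f ∈ F, IsLyndon f) (hdec : F.IsChain (· ≥ ·)) {v : List α}
    (hv : v <:+ F.flatten) (hv₀ : v ≠ []) : F.getLast hne ≤ v := by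
  induction F with
  | nil => exact absurd rfl hne
  | cons w F ih =>
    rw [flatten_cons] at hv
    rcases suffix_append_cases hv with hv | ⟨s, hs, hs₀, rfl⟩
    · have hF : F ≠ [] := by
        rintro rfl
        exact hv₀ (suffix_nil.mp hv)
      rw [getLast_cons hF]
      exact ih hF (fun f hf => hLyn f (mem_cons_of_mem w hf)) hdec.tail hv
    · calc (w :: F).getLast hne ≤ w := getLast_le_head_of_isChain_ge hdec
        _ ≤ s := (hLyn w mem_cons_self).le_of_isSuffix hs hs₀
        -- core's `List.le_append_left` is stated for core's `≤`, which is `¬ _ < _` on lists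
        _ ≤ s ++ F.flatten := not_lt.mp le_append_left

theorem getLast_isSuffix_flatten {β : Type*} {F : List (List β)} (hne : F ≠ []) :
    F.getLast hne <:+ F.flatten := by
  conv_rhs => rw [← dropLast_append_getLast hne]
  simp

theorem stmt13_general (P : List α) (F : List (List α)) (hne : F ≠ [])
    (hPF : P = F.flatten) (hLyn : ∀ f ∈ F, IsLyndon f)
    (hdec : F.Chain' (· ≥ ·)) :
    F.getLast hne <:+ P ∧ F.getLast hne ≠ [] ∧
      ∀ v : List α, v <:+ P → v ≠ [] → F.getLast hne ≤ v := by
  subst hPF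
  exact ⟨getLast_isSuffix_flatten hne, (hLyn _ (getLast_mem hne)).1,
    fun _ hv hv₀ => getLast_le_of_isSuffix_flatten hne hLyn hdec hv hv₀⟩

theorem stmt13 (P : List α) (hP : P ≠ []) (F : List (List α)) (hne : F ≠ [])
    (hPF : P = F.flatten) (hLyn : ∀ f ∈ F, IsLyndon f)
    (hdec : F.Chain' (· ≥ ·)) :
    F.getLast hne <:+ P ∧ F.getLast hne ≠ [] ∧
      ∀ v : List α, v <:+ P → v ≠ [] → F.getLast hne ≤ v :=
  stmt13_general P F hne hPF hLyn hdec
end
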